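/- Let ψ : ℝⁿ → ℝ ∪ {+∞} be a lower semicontinuous convex function such that ∫ e^{−ψ} dx > 0. Then the following are equivalent: (i) ∫ e^{−ψ} dx < +∞; (ii) there exist a > 0 and b ∈ ℝ such that ψ(x) ≥ a|x| + b for all x ∈ ℝⁿ; (iii) the point 0 belongs to the interior of dom(ψ*), where ψ*(y) = sup_{x∈ℝⁿ} {x·y − ψ(x)} and dom(ψ*) = {y : ψ*(y) < +∞}. -/

import Mathlib

open MeasureTheory Real Filter Set
attribute [local instance] Classical.propDecidable
open scoped ENNReal NNReal Topology

noncomputable section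

/-- `ℝⁿ` as a Euclidean space. -/
abbrev En (n : ℕ) : Type := EuclideanSpace ℝ (Fin n)

/-- `exp(-t)` for an extended real `t`, valued in `ℝ≥0∞`. -/
def expNeg (t : EReal) : ℝ≥0∞ :=
  if t = ⊥ then ⊤ else if t = ⊤ then 0 else ENNReal.ofReal (Real.exp (-t.toReal))

/-- Convexity for `EReal`-valued functions on `ℝⁿ`. -/
def ConvexE {n : ℕ} (f : En n → EReal) : Prop :=
  ∀ x y : En n, ∀ t : ℝ, 0 ≤ t → t ≤ 1 →
    f (t • x + (1 - t) • y) ≤ (t : EReal) * f x + ((1 - t : ℝ) : EReal) * f y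

/-- The class `F(ℝⁿ)`: proper lower semicontinuous convex functions `ℝⁿ → ℝ ∪ {+∞}`. -/
def IsF {n : ℕ} (f : En n → EReal) : Prop :=
  LowerSemicontinuous f ∧ ConvexE f ∧ (∃ x, f x ≠ ⊤) ∧ (∀ x, f x ≠ ⊥)

/-- Fenchel–Legendre transform. -/
def legendre {n : ℕ} (f : En n → EReal) : En n → EReal :=
  fun y => ⨆ x : En n, ((inner ℝ x y : ℝ) : EReal) - f x

/-- `∫ e^{-f} dm`, valued in `ℝ≥0∞`. -/
def intExpNeg {n : ℕ} (m : Measure (En n)) (f : En n → EReal) : ℝ≥0∞ :=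
  ∫⁻ x, expNeg (f x) ∂m

/-- Extended-real logarithm of an `ℝ≥0∞` number. -/
def elog (x : ℝ≥0∞) : EReal :=
  if x = 0 then ⊥ else if x = ⊤ then ⊤ else ((Real.log x.toReal : ℝ) : EReal)

/-- Positive part of an extended real, as an element of `ℝ≥0∞`. -/
def posPart (x : EReal) : ℝ≥0∞ := if x = ⊤ then ⊤ else ENNReal.ofReal x.toReal

/-- Extended-valued integral `∫ f dμ := ∫ f⁺ dμ - ∫ f⁻ dμ`. -/
def eInt {n : ℕ} (μ : Measure (En n)) (f : En n → EReal) : EReal :=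
  ((∫⁻ x, posPart (f x) ∂μ : ℝ≥0∞) : EReal) - ((∫⁻ x, posPart (-f x) ∂μ : ℝ≥0∞) : EReal)

/-- Probability measures with finite first moment. -/
def MemP1 {n : ℕ} (ν : Measure (En n)) : Prop :=
  IsProbabilityMeasure ν ∧ ∫⁻ x, (‖x‖₊ : ℝ≥0∞) ∂ν ≠ ⊤

/-- Probability measures with finite second moment. -/
def MemP2 {n : ℕ} (ν : Measure (En n)) : Prop :=
  IsProbabilityMeasure ν ∧ ∫⁻ x, (‖x‖₊ : ℝ≥0∞) ^ 2 ∂ν ≠ ⊤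

/-- A measure is compactly supported. -/
def HasCompactSupportMeasure {n : ℕ} (ν : Measure (En n)) : Prop :=
  ∃ K : Set (En n), IsCompact K ∧ ν Kᶜ = 0

/-- Coordinate sign flip of a point of `ℝⁿ`. -/
def signFlip {n : ℕ} (ε : Fin n → Bool) (x : En n) : En n :=
  (EuclideanSpace.equiv (Fin n) ℝ).symm (fun i => if ε i then x i else -x i)

/-- Unconditional function. -/
def UncondFun {n : ℕ} (f : En n → EReal) : Prop := ∀ ε x, f (signFlip ε x) = f x

/-- Symmetric function. -/
def SymmFun {n : ℕ} (f : En n → EReal) : Prop := ∀ x, f (-x) = f x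

/-- Unconditional measure. -/
def UncondMeas {n : ℕ} (ν : Measure (En n)) : Prop := ∀ ε, Measure.map (signFlip ε) ν = ν

/-- Symmetric measure. -/
def SymmMeas {n : ℕ} (ν : Measure (En n)) : Prop := Measure.map (fun x => -x) ν = ν

/-- The functional `K(ν|m) = sup { ∫(-f) dν + log ∫ e^{-f*} dm : f ∈ L¹(ν) ∩ F(ℝⁿ) }`. -/
def Kfun {n : ℕ} (ν m : Measure (En n)) : EReal :=
  ⨆ (f : En n → EReal) (_ : IsF f ∧ (∀ᵐ x ∂ν, f x ≠ ⊤) ∧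
      Integrable (fun x => (f x).toReal) ν),
    ((-(∫ x, (f x).toReal ∂ν) : ℝ) : EReal) + elog (intExpNeg m (legendre f))

/-- Maximal correlation transport cost `T(ν₁, ν₂)`. -/
def Tcost {n : ℕ} (ν₁ ν₂ : Measure (En n)) : EReal :=
  ⨅ (f : En n → EReal) (_ : IsF f), eInt ν₁ f + eInt ν₂ (legendre f)

/-- Relative entropy `H(η|m)`, equal to `+∞` when `η` is not absolutely continuous w.r.t. `m`. -/
def relEnt {n : ℕ} (η m : Measure (En n)) : EReal :=
  if η ≪ m then eInt η (fun x => ((Real.log (η.rnDeriv m x).toReal : ℝ) : EReal)) else ⊤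

/-- The standard Gaussian measure on `ℝⁿ`. -/
def stdGaussian (n : ℕ) : Measure (En n) :=
  volume.withDensity fun x =>
    ENNReal.ofReal ((2 * Real.pi) ^ (-(n : ℝ) / 2) * Real.exp (-‖x‖ ^ 2 / 2))

/-- Squared `2`-Wasserstein distance. -/
def W2sq {n : ℕ} (μ ν : Measure (En n)) : ℝ≥0∞ :=
  ⨅ (p : Measure (En n × En n)) (_ : p.map Prod.fst = μ ∧ p.map Prod.snd = ν),
    ∫⁻ q, (‖q.1 - q.2‖₊ : ℝ≥0∞) ^ 2 ∂p

/-- Absolute continuity of `g : ℝ → ℝ` on `[a, b]` (FTC characterization). -/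
def ACOn (g : ℝ → ℝ) (a b : ℝ) : Prop :=
  IntegrableOn (deriv g) (Set.Icc a b) ∧
    ∀ x ∈ Set.Icc a b, g x - g a = ∫ t in a..x, deriv g t

/-- The point of `ℝⁿ` obtained by replacing the `i`-th coordinate of `x` by `t`. -/
def updCoord {n : ℕ} (x : En n) (i : Fin n) (t : ℝ) : En n :=
  (EuclideanSpace.equiv (Fin n) ℝ).symm
    (Function.update ((EuclideanSpace.equiv (Fin n) ℝ) x) i t)

/-- Absolute continuity on almost every line parallel to a coordinate axis. -/
def ACL {n : ℕ} (g : En n → ℝ) : Prop :=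
  ∀ i : Fin n, ∀ᵐ x ∂(volume : Measure (En n)),
    ∀ a b : ℝ, ACOn (fun t => g (updCoord x i t)) a b

/-- Squared norm of the coordinate-wise a.e. gradient, via line derivatives. -/
def gradSq {n : ℕ} (g : En n → ℝ) (x : En n) : ℝ :=
  ∑ i : Fin n, (lineDeriv ℝ g x (EuclideanSpace.single i 1)) ^ 2

/-- Relative Fisher information `I(η|γ) = 4 ∫ |∇ √h|² dγ` where `h = dη/dγ`;
`+∞` unless `√h` is absolutely continuous on almost every line parallel to an axis. -/
def fisherInfo {n : ℕ} (η γ : Measure (En n)) : ℝ≥0∞ :=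
  if η ≪ γ ∧ ACL (fun x => Real.sqrt (η.rnDeriv γ x).toReal) then
    4 * ∫⁻ x, ENNReal.ofReal (gradSq (fun y => Real.sqrt (η.rnDeriv γ y).toReal) x) ∂γ
  else ⊤

/-- Deficit in the Gaussian logarithmic Sobolev inequality. -/
def lsDeficit {n : ℕ} (η : Measure (En n)) : EReal :=
  ((1 / 2 : ℝ) : EReal) * ((fisherInfo η (stdGaussian n) : ℝ≥0∞) : EReal)
    - relEnt η (stdGaussian n)

/-- Moment measure `∇V_# η` of a log-concave measure `η = e^{-V} dx`. -/
def momentMeasure {n : ℕ} (V : En n → EReal) (η : Measure (En n)) : Measure (En n) :=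
  Measure.map (fun x => gradient (fun y => (V y).toReal) x) η

/-- Essential continuity of a convex function. -/
def EssCont {n : ℕ} (V : En n → EReal) : Prop :=
  μH[(n : ℝ) - 1] {x : En n | x ∈ frontier {y | V y ≠ ⊤} ∧ V x ≠ ⊤} = 0

/-- The functional inverse Santaló inequality with constant `c`, restricted to a class `P`. -/
def InvSantaloOn {n : ℕ} (c : ℝ) (P : (En n → EReal) → Prop) : Prop :=
  ∀ f : En n → EReal, IsF f → P f →
    0 < intExpNeg volume f → 0 < intExpNeg volume (legendre f) →
    ENNReal.ofReal c ^ n ≤ intExpNeg volume f * intExpNeg volume (legendre f)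

/-- The functional inverse Santaló inequality `IS_n(c)`. -/
def InvSantalo (n : ℕ) (c : ℝ) : Prop := InvSantaloOn (n := n) c fun _ => True

/-- The symmetric functional inverse Santaló inequality `IS_{n,s}(c)`. -/
def InvSantaloSymm (n : ℕ) (c : ℝ) : Prop := InvSantaloOn (n := n) c SymmFun

/-- The unconditional functional inverse Santaló inequality `IS_{n,u}(c)`. -/
def InvSantaloUncond (n : ℕ) (c : ℝ) : Prop := InvSantaloOn (n := n) c UncondFun

/-!
(ii) ⇒ (i) is domination of `e^{-ψ}` by `e^{-a|x|-b}`, which is integrable. (ii) ⇒ (iii): the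
bound `ψ(x) ≥ a|x| + b` gives `ψ*(y) ≤ -b` for `|y| ≤ a`. (iii) ⇒ (ii): `ψ ≥ ⟨·, y⟩ - ψ*(y)` for
finitely many `y` in `dom ψ*` around `0`, and the maximum of these affine functions grows
linearly in every direction.

(i) ⇒ (ii): since `∫ e^{-ψ} > 0`, some sublevel set `{ψ ≤ c}` has positive volume, so, being
convex, it has an interior point `x₀`. The sublevel set `{ψ ≤ c + 1}` has finite volume (Markov),
and a convex set with an interior point and finite volume is bounded, say by `|x - x₀| < R`.
Convexity along the segment from `x₀` to `x` then forces `ψ(x) ≥ c + |x - x₀| / R` when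
`|x - x₀| ≥ R`, and lower semicontinuity bounds `ψ` below on the compact ball.
-/
open Metric

lemma expNeg_eq_exp_neg (t : EReal) : expNeg t = EReal.exp (-t) := by
  induction t using EReal.rec <;> simp [expNeg, ← EReal.coe_neg]

lemma expNeg_antitone : Antitone expNeg := fun s t hst => by
  simpa only [expNeg_eq_exp_neg] using EReal.exp_monotone (EReal.neg_le_neg_iff.2 hst)

lemma expNeg_coe (r : ℝ) : expNeg r = ENNReal.ofReal (Real.exp (-r)) := by
  simp [expNeg]

lemma Measurable.expNeg {α : Type*} [MeasurableSpace α] {f : α → EReal} (hf : Measurable f) :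
    Measurable fun x => expNeg (f x) := by
  simp only [expNeg_eq_exp_neg]
  exact hf.neg.ereal_exp

lemma exp_neg_mul_le_one_add_rpow {a t : ℝ} (ha : 0 < a) (ht : 0 ≤ t) (k : ℕ) :
    Real.exp (-(a * t)) ≤ k.factorial * Real.exp a / a ^ k * (1 + t) ^ (-(k : ℝ)) := by
  have hpow := Real.pow_div_factorial_le_exp (x := a * (1 + t)) (by positivity) k
  rw [div_le_iff₀ (by positivity), mul_pow] at hpow
  have h1t : 0 < (1 + t) ^ k := by positivity
  rw [Real.rpow_neg (by positivity), Real.rpow_natCast, ← div_eq_mul_inv,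
    le_div_iff₀ h1t, le_div_iff₀ (by positivity), Real.exp_neg]
  calc (Real.exp (a * t))⁻¹ * (1 + t) ^ k * a ^ k
      = (Real.exp (a * t))⁻¹ * (a ^ k * (1 + t) ^ k) := by ring
    _ ≤ (Real.exp (a * t))⁻¹ * (Real.exp (a * (1 + t)) * k.factorial) := by gcongr
    _ = k.factorial * Real.exp a := by
        rw [mul_add, mul_one, Real.exp_add]; field_simp

section
variable {E : Type*} [NormedAddCommGroup E] [NormedSpace ℝ E] [FiniteDimensional ℝ E]
  [MeasurableSpace E] [BorelSpace E] (μ : Measure E) [μ.IsAddHaarMeasure]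

lemma integrable_exp_neg_mul_norm_add {a : ℝ} (ha : 0 < a) (b : ℝ) :
    Integrable (fun x : E => Real.exp (-(a * ‖x‖ + b))) μ := by
  set k := Module.finrank ℝ E + 1
  have hk : (Module.finrank ℝ E : ℝ) < k := by simp [k]
  refine (((integrable_one_add_norm (μ := μ) hk).const_mul
    (k.factorial * Real.exp a / a ^ k)).const_mul (Real.exp (-b))).mono'
    (by fun_prop) (Eventually.of_forall fun x => ?_)
  rw [Real.norm_of_nonneg (Real.exp_pos _).le, neg_add, Real.exp_add, mul_comm]
  exact mul_le_mul_of_nonneg_left (exp_neg_mul_le_one_add_rpow ha (norm_nonneg x) k)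
    (Real.exp_pos _).le

lemma lintegral_expNeg_lt_top_of_linear_minorant {f : E → EReal} {a b : ℝ} (ha : 0 < a)
    (hf : ∀ x, ((a * ‖x‖ + b : ℝ) : EReal) ≤ f x) :
    ∫⁻ x, expNeg (f x) ∂μ < ⊤ :=
  calc ∫⁻ x, expNeg (f x) ∂μ ≤ ∫⁻ x, ENNReal.ofReal (Real.exp (-(a * ‖x‖ + b))) ∂μ :=
        lintegral_mono fun x => (expNeg_antitone (hf x)).trans_eq (expNeg_coe _)
    _ < ⊤ := (integrable_exp_neg_mul_norm_add μ ha b).lintegral_lt_top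

end

section
variable {α : Type*} [MeasurableSpace α] {μ : Measure α} {f : α → EReal}

lemma exists_measure_sublevel_pos (hpos : 0 < ∫⁻ x, expNeg (f x) ∂μ) :
    ∃ c : ℝ, 0 < μ {x | f x ≤ c} := by
  by_contra! hnull
  have hae : ∀ᵐ x ∂μ, f x = ⊤ := by
    refine measure_mono_null (fun x (hx : f x ≠ ⊤) => ?_)
      (measure_iUnion_null fun k : ℕ => nonpos_iff_eq_zero.1 (hnull k))
    exact mem_iUnion.2 ⟨⌈(f x).toReal⌉₊,
      (EReal.le_coe_toReal hx).trans (EReal.coe_le_coe_iff.2 (Nat.le_ceil _))⟩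
  have : ∫⁻ x, expNeg (f x) ∂μ = 0 :=
    (lintegral_congr_ae (hae.mono fun x hx => by simp [expNeg, hx])).trans lintegral_zero
  exact hpos.ne' this

lemma measure_sublevel_ne_top (hf : Measurable f) (hfin : ∫⁻ x, expNeg (f x) ∂μ < ⊤) (c : ℝ) :
    μ {x | f x ≤ c} ≠ ⊤ := by
  have hmarkov := mul_meas_ge_le_lintegral₀ (μ := μ) hf.expNeg.aemeasurable (expNeg c)
  refine ne_top_of_le_ne_top ?_ (measure_mono fun x (hx : f x ≤ c) => expNeg_antitone hx)
  exact (ENNReal.lt_top_of_mul_ne_top_right (hmarkov.trans_lt hfin).ne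
    (by simp [expNeg_coe, Real.exp_pos])).ne

end

section
variable {E : Type*} [NormedAddCommGroup E] [NormedSpace ℝ E] {s : Set E}

lemma Convex.ball_add_smul_sub_subset (hs : Convex ℝ s) {x z : E} {r t : ℝ}
    (hball : ball x r ⊆ s) (hz : z ∈ s) (ht0 : 0 ≤ t) (ht1 : t < 1) :
    ball (x + t • (z - x)) ((1 - t) * r) ⊆ s := by
  intro y hy
  have h1t : 0 < 1 - t := by linarith
  set w := x + (1 - t)⁻¹ • (y - (x + t • (z - x)))
  have hw : w ∈ ball x r := by
    rw [mem_ball, dist_eq_norm, add_sub_cancel_left, norm_smul, Real.norm_of_nonneg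
      (inv_nonneg.2 h1t.le), inv_mul_lt_iff₀ h1t, ← dist_eq_norm]
    exact hy
  have hy : y = (1 - t) • w + t • z := by
    simp only [w, smul_add, smul_smul, mul_inv_cancel₀ h1t.ne', one_smul]
    module
  rw [hy]
  exact hs (hball hw) hz h1t.le ht0 (by ring)

variable [MeasurableSpace E] [BorelSpace E] (μ : Measure E) [μ.IsAddHaarMeasure]

lemma Convex.natCast_mul_measure_ball_le (hs : Convex ℝ s) {x z : E} {r : ℝ} (hr : 0 < r)
    (hball : ball x r ⊆ s) (hz : z ∈ s) {N : ℕ} (hN : 4 * r * N ≤ ‖z - x‖) :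
    N * μ (ball (0 : E) (r / 2)) ≤ μ s := by
  rcases N.eq_zero_or_pos with rfl | hN0
  · simp
  set d := ‖z - x‖
  have hd : 0 < d := lt_of_lt_of_le (by positivity) hN
  set c : ℕ → E := fun j => x + (2 * r * j / d) • (z - x)
  have hsub : ∀ j < N, ball (c j) (r / 2) ⊆ s := by
    intro j hj
    have ht : 2 * r * j / d < 1 / 2 := by
      rw [div_lt_iff₀ hd]
      have : (j : ℝ) + 1 ≤ N := by exact_mod_cast hj
      nlinarith
    refine (ball_subset_ball ?_).trans
      (hs.ball_add_smul_sub_subset hball hz (by positivity) (by linarith))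
    nlinarith
  have hdisj : (Finset.range N : Set ℕ).PairwiseDisjoint fun j => ball (c j) (r / 2) := by
    intro i _ j _ hij
    refine ball_disjoint_ball ?_
    have hc : c i - c j = (2 * r / d * ((i : ℝ) - j)) • (z - x) := by
      simp only [c]; module
    have hij' : (1 : ℝ) ≤ |(i : ℝ) - j| := by
      have h : (i : ℤ) - j ≠ 0 := sub_ne_zero.2 (by exact_mod_cast hij)
      exact_mod_cast Int.one_le_abs h
    rw [dist_eq_norm, hc, norm_smul, Real.norm_eq_abs, abs_mul, abs_div, abs_of_pos hd,
      abs_of_pos (by positivity : 0 < 2 * r), div_mul_eq_mul_div, div_mul_cancel₀ _ hd.ne']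
    nlinarith
  calc (N : ℝ≥0∞) * μ (ball 0 (r / 2))
      = ∑ j ∈ Finset.range N, μ (ball (c j) (r / 2)) := by
        simp [Measure.addHaar_ball_center]
    _ = μ (⋃ j ∈ Finset.range N, ball (c j) (r / 2)) :=
        (measure_biUnion_finset hdisj fun _ _ => measurableSet_ball).symm
    _ ≤ μ s := measure_mono (iUnion₂_subset fun j hj => hsub j (Finset.mem_range.1 hj))

lemma Convex.isBounded_of_measure_ne_top (hs : Convex ℝ s) (hint : (interior s).Nonempty)
    (hfin : μ s ≠ ⊤) : Bornology.IsBounded s := by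
  obtain ⟨x, hx⟩ := hint
  obtain ⟨r, hr, hball⟩ := Metric.isOpen_iff.1 isOpen_interior x hx
  obtain ⟨N, hN⟩ := ENNReal.exists_nat_mul_gt (measure_ball_pos μ (0 : E) (half_pos hr)).ne' hfin
  refine (isBounded_iff_subset_ball x).2 ⟨4 * r * N, fun z hz => ?_⟩
  by_contra hfar
  rw [mem_ball, dist_eq_norm, not_lt] at hfar
  exact (hs.natCast_mul_measure_ball_le μ hr (hball.trans interior_subset) hz hfar).not_gt hN

variable [FiniteDimensional ℝ E]

lemma Convex.interior_nonempty_of_measure_pos (hs : Convex ℝ s) (h : 0 < μ s) :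
    (interior s).Nonempty := by
  rw [nonempty_iff_ne_empty]
  intro hint
  have : s ⊆ frontier s := by
    rw [frontier, hint, sdiff_empty]; exact subset_closure
  exact h.ne' (measure_mono_null this (hs.addHaar_frontier μ))

end

lemma LowerSemicontinuous.exists_le_of_isCompact {X : Type*} [TopologicalSpace X]
    {f : X → EReal} (hf : LowerSemicontinuous f) (hbot : ∀ x, f x ≠ ⊥) {K : Set X}
    (hK : IsCompact K) : ∃ m : ℝ, ∀ x ∈ K, (m : EReal) ≤ f x := by
  rcases K.eq_empty_or_nonempty with rfl | hne
  · exact ⟨0, by simp⟩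
  obtain ⟨x₀, hx₀, hmin⟩ := (hf.lowerSemicontinuousOn K).exists_isMinOn hne hK
  exact ⟨(f x₀).toReal, fun x hx => (EReal.coe_toReal_le (hbot x₀)).trans (hmin hx)⟩

lemma exists_norm_minorant_of_far_of_near {E : Type*} [SeminormedAddCommGroup E]
    {f : E → EReal} {x₀ : E} {a c m R : ℝ} (ha : 0 < a)
    (hfar : ∀ x, R ≤ ‖x - x₀‖ → ((a * ‖x - x₀‖ + c : ℝ) : EReal) ≤ f x)
    (hnear : ∀ x ∈ closedBall x₀ R, (m : EReal) ≤ f x) :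
    ∃ b : ℝ, ∀ x, ((a * ‖x‖ + b : ℝ) : EReal) ≤ f x := by
  refine ⟨min c (m - a * R) - a * ‖x₀‖, fun x => ?_⟩
  have htri : a * ‖x‖ ≤ a * ‖x - x₀‖ + a * ‖x₀‖ := by
    rw [← mul_add]; exact mul_le_mul_of_nonneg_left (norm_le_norm_sub_add x x₀) ha.le
  rcases le_total R ‖x - x₀‖ with hx | hx
  · refine le_trans (EReal.coe_le_coe_iff.2 ?_) (hfar x hx)
    linarith [min_le_left c (m - a * R)]
  · refine le_trans (EReal.coe_le_coe_iff.2 ?_) (hnear x (by rwa [mem_closedBall, dist_eq_norm]))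
    nlinarith [min_le_right c (m - a * R)]

section
variable {n : ℕ} {f : En n → EReal}

lemma ConvexE.apply_combo_le (hf : ConvexE f) {x y : En n} {t u v : ℝ} (ht0 : 0 ≤ t)
    (ht1 : t ≤ 1) (hx : f x ≤ u) (hy : f y ≤ v) :
    f (t • x + (1 - t) • y) ≤ ((t * u + (1 - t) * v : ℝ) : EReal) := by
  refine (hf x y t ht0 ht1).trans ?_
  rw [EReal.coe_add, EReal.coe_mul, EReal.coe_mul]
  gcongr

lemma ConvexE.convex_sublevel (hf : ConvexE f) (c : ℝ) : Convex ℝ {x | f x ≤ c} := by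
  intro x hx y hy s t hs ht hst
  obtain rfl : t = 1 - s := by linarith
  have := hf.apply_combo_le hs (by linarith) hx hy
  rwa [← add_mul, add_sub_cancel, one_mul] at this

lemma ConvexE.linear_growth_of_sublevel_subset_ball (hf : ConvexE f) {x₀ : En n} {c R : ℝ}
    (hR : 0 < R) (hx₀ : f x₀ ≤ c) (hsub : {x | f x ≤ ((c + 1 : ℝ) : EReal)} ⊆ ball x₀ R)
    {x : En n} (hx : R ≤ ‖x - x₀‖) : ((R⁻¹ * ‖x - x₀‖ + c : ℝ) : EReal) ≤ f x := by
  by_contra! hlt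
  set d := ‖x - x₀‖
  have hd : 0 < d := hR.trans_le hx
  have hz := hf.apply_combo_le (t := R / d) (by positivity) ((div_le_one hd).2 hx) hlt.le hx₀
  have hcomb : R / d * (R⁻¹ * d + c) + (1 - R / d) * c = c + 1 := by field_simp; ring
  rw [hcomb] at hz
  have hnorm : ‖(R / d) • x + (1 - R / d) • x₀ - x₀‖ = R := by
    rw [show (R / d) • x + (1 - R / d) • x₀ - x₀ = (R / d) • (x - x₀) by module, norm_smul,
      Real.norm_of_nonneg (by positivity), div_mul_cancel₀ _ hd.ne']
  have := hsub hz
  rw [mem_ball, dist_eq_norm, hnorm] at this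
  exact lt_irrefl _ this

end

theorem exists_linear_minorant_of_intExpNeg_lt_top {n : ℕ} {ψ : En n → EReal}
    (hlsc : LowerSemicontinuous ψ)
    (hconv : ConvexE ψ) (hbot : ∀ x, ψ x ≠ ⊥) (hpos : 0 < intExpNeg volume ψ)
    (hfin : intExpNeg volume ψ < ⊤) :
    ∃ a b : ℝ, 0 < a ∧ ∀ x, ((a * ‖x‖ + b : ℝ) : EReal) ≤ ψ x := by
  obtain ⟨c, hc⟩ := exists_measure_sublevel_pos hpos
  obtain ⟨x₀, hx₀⟩ := (hconv.convex_sublevel c).interior_nonempty_of_measure_pos volume hc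
  have hsub : {x | ψ x ≤ c} ⊆ {x | ψ x ≤ ((c + 1 : ℝ) : EReal)} := fun x hx =>
    hx.trans (EReal.coe_le_coe_iff.2 (by linarith))
  have hbdd := (hconv.convex_sublevel (c + 1)).isBounded_of_measure_ne_top volume
    ⟨x₀, interior_mono hsub hx₀⟩ (measure_sublevel_ne_top hlsc.measurable hfin _)
  obtain ⟨R, hR⟩ := (isBounded_iff_subset_ball x₀).1 hbdd
  have hx₀c : x₀ ∈ {x | ψ x ≤ c} := interior_subset hx₀
  have hR0 : 0 < R := pos_of_mem_ball (hR (hsub hx₀c))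
  obtain ⟨m, hm⟩ := hlsc.exists_le_of_isCompact hbot (isCompact_closedBall x₀ R)
  obtain ⟨b, hb⟩ := exists_norm_minorant_of_far_of_near (inv_pos.2 hR0)
    (fun x hx => hconv.linear_growth_of_sublevel_subset_ball hR0 hx₀c hR hx) hm
  exact ⟨R⁻¹, b, inv_pos.2 hR0, hb⟩


lemma exists_finset_norm_le_two_mul_inner (E : Type*) [NormedAddCommGroup E]
    [InnerProductSpace ℝ E] [FiniteDimensional ℝ E] :
    ∃ Y : Finset E, (∀ y ∈ Y, ‖y‖ ≤ 1) ∧ ∀ x : E, ∃ y ∈ Y, ‖x‖ ≤ 2 * inner ℝ x y := by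
  obtain ⟨U, hU, hcover⟩ := (isCompact_sphere (0 : E) 1).elim_nhds_subcover
    (fun u => {v | 1 / 2 < inner ℝ v u}) fun u hu => by
      refine (isOpen_lt continuous_const (continuous_id.inner continuous_const)).mem_nhds ?_
      rw [mem_sphere_zero_iff_norm] at hu
      simp [hu]
      norm_num
  refine ⟨insert 0 U, ?_, fun x => ?_⟩
  · simp only [Finset.mem_insert, forall_eq_or_imp, norm_zero, zero_le_one, true_and]
    exact fun y hy => (mem_sphere_zero_iff_norm.1 (hU y hy)).le
  rcases eq_or_ne x 0 with rfl | hx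
  · exact ⟨0, Finset.mem_insert_self _ _, by simp⟩
  have hxn : 0 < ‖x‖ := norm_pos_iff.2 hx
  have hxs : ‖x‖⁻¹ • x ∈ sphere (0 : E) 1 := by
    rw [mem_sphere_zero_iff_norm, norm_smul, norm_inv, norm_norm, inv_mul_cancel₀ hxn.ne']
  obtain ⟨u, hu, hxu⟩ := mem_iUnion₂.1 (hcover hxs)
  refine ⟨u, Finset.mem_insert_of_mem hu, ?_⟩
  rw [mem_ofPred_eq, real_inner_smul_left, lt_inv_mul_iff₀ hxn] at hxu
  linarith

section
variable {n : ℕ} {ψ : En n → EReal}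

lemma legendre_le_of_linear_minorant {a b : ℝ}
    (h : ∀ x, ((a * ‖x‖ + b : ℝ) : EReal) ≤ ψ x) {y : En n} (hy : ‖y‖ ≤ a) :
    legendre ψ y ≤ ((-b : ℝ) : EReal) := by
  refine iSup_le fun x => (EReal.sub_le_sub le_rfl (h x)).trans ?_
  rw [← EReal.coe_sub, EReal.coe_le_coe_iff]
  nlinarith [real_inner_le_norm x y, norm_nonneg x]

lemma zero_mem_interior_dom_legendre {a b : ℝ} (ha : 0 < a)
    (h : ∀ x, ((a * ‖x‖ + b : ℝ) : EReal) ≤ ψ x) :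
    (0 : En n) ∈ interior {y | legendre ψ y ≠ ⊤} := by
  refine mem_interior.2 ⟨ball 0 a, fun y hy => ?_, isOpen_ball, mem_ball_self ha⟩
  rw [mem_ball_zero_iff] at hy
  exact ne_top_of_le_ne_top (EReal.coe_ne_top _) (legendre_le_of_linear_minorant h hy.le)

lemma inner_sub_toReal_legendre_le {y : En n} (hy : legendre ψ y ≠ ⊤) (x : En n) :
    ((inner ℝ x y - (legendre ψ y).toReal : ℝ) : EReal) ≤ ψ x := by
  have hle : ((inner ℝ x y : ℝ) : EReal) - ψ x ≤ (legendre ψ y).toReal :=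
    (le_iSup (fun x => ((inner ℝ x y : ℝ) : EReal) - ψ x) x).trans (EReal.le_coe_toReal hy)
  induction h : ψ x using EReal.rec with
  | bot => simp [h] at hle
  | coe r =>
    rw [h, ← EReal.coe_sub, EReal.coe_le_coe_iff] at hle
    exact EReal.coe_le_coe_iff.2 (by linarith)
  | top => exact le_top

lemma exists_linear_minorant_of_zero_mem_interior_dom_legendre
    (h : (0 : En n) ∈ interior {y | legendre ψ y ≠ ⊤}) :
    ∃ a b : ℝ, 0 < a ∧ ∀ x, ((a * ‖x‖ + b : ℝ) : EReal) ≤ ψ x := by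
  obtain ⟨ε, hε, hball⟩ := Metric.isOpen_iff.1 isOpen_interior 0 h
  obtain ⟨Y, hY1, hY⟩ := exists_finset_norm_le_two_mul_inner (En n)
  have hdom : ∀ y ∈ Y, legendre ψ ((ε / 2) • y) ≠ ⊤ := fun y hy => interior_subset <| hball <| by
    rw [mem_ball_zero_iff, norm_smul, Real.norm_of_nonneg (by positivity)]
    nlinarith [hY1 y hy]
  obtain ⟨M, hM⟩ := (Y.image fun y => (legendre ψ ((ε / 2) • y)).toReal).bddAbove
  refine ⟨ε / 4, -M, by positivity, fun x => ?_⟩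
  obtain ⟨y, hy, hxy⟩ := hY x
  refine le_trans (EReal.coe_le_coe_iff.2 ?_) (inner_sub_toReal_legendre_le (hdom y hy) x)
  have := hM (Finset.mem_coe.2 (Finset.mem_image_of_mem _ hy))
  rw [real_inner_smul_right]
  nlinarith

end

/-- For a lower semicontinuous convex `ψ : ℝⁿ → ℝ ∪ {+∞}` with
`∫ e^{-ψ} dx > 0`, the following are equivalent: (i) `∫ e^{-ψ} dx < ∞`;
(ii) `ψ(x) ≥ a|x| + b` for some `a > 0`, `b ∈ ℝ`; (iii) `0 ∈ int(dom ψ*)`. -/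
theorem statement12 (n : ℕ) (ψ : En n → EReal) (hlsc : LowerSemicontinuous ψ)
    (hconv : ConvexE ψ) (hbot : ∀ x, ψ x ≠ ⊥)
    (hpos : 0 < intExpNeg volume ψ) :
    (intExpNeg volume ψ < ⊤ ↔
      ∃ a b : ℝ, 0 < a ∧ ∀ x, ((a * ‖x‖ + b : ℝ) : EReal) ≤ ψ x) ∧
    (intExpNeg volume ψ < ⊤ ↔
      (0 : En n) ∈ interior {y | legendre ψ y ≠ ⊤}) := by
  have h12 : intExpNeg volume ψ < ⊤ ↔
      ∃ a b : ℝ, 0 < a ∧ ∀ x, ((a * ‖x‖ + b : ℝ) : EReal) ≤ ψ x :=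
    ⟨exists_linear_minorant_of_intExpNeg_lt_top hlsc hconv hbot hpos,
      fun ⟨_, _, ha, h⟩ => lintegral_expNeg_lt_top_of_linear_minorant volume ha h⟩
  refine ⟨h12, h12.trans ⟨fun ⟨_, _, ha, h⟩ => zero_mem_interior_dom_legendre ha h,
    exists_linear_minorant_of_zero_mem_interior_dom_legendre⟩⟩

end
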